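/- arXiv:1403.3226 — 2 statements merged into one kernel-verified Lean document; each statement's English description precedes it below -/
import Mathlib

section
/- Let k be a real closed field with algebraic closure k̄ = k(i), and let A be the 2n×2n block-diagonal matrix over k̄ with n diagonal blocks equal to [[0,1],[-1,0]]. If M is an invertible 2n×2n matrix over k̄ satisfying M = A·conj(M)·A⁻¹ (where conj applies the nontrivial k-automorphism of k̄ entrywise), then det(M) is a positive element of k. -/
/-!
Grouping the indices in consecutive pairs makes `A` block diagonal with blocks `[[0,1],[-1,0]]`,
and a matrix commuting with `A ∘ conj` is then exactly one whose `2 × 2` blocks are images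
`mu h` of quaternions: `M = mu(N)` for a quaternionic matrix `N`. Gaussian elimination over the
division ring `ℍ[k]` uses only block-unitriangular factors, on which `det ∘ mu` is `1`, and so
reduces `det (mu N)` to a product of the values `det (mu d) = normSq d ≥ 0` at the pivots. Hence
`det M` is a nonnegative element of `k`, and it is nonzero because `M` is invertible.
-/
open Polynomial Matrix

/-- A (linearly ordered) field is real closed if every nonnegative element is a square and
every polynomial of odd degree has a root. -/
def IsRealClosed' (k : Type*) [Field k] [LinearOrder k] [IsStrictOrderedRing k] : Prop :=
  (∀ x : k, 0 ≤ x → ∃ y, y ^ 2 = x) ∧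
  ∀ p : Polynomial k, Odd p.natDegree → ∃ x, p.eval x = 0

/-- The algebraic closure k̄ = k(i) of a real closed field `k`. -/
noncomputable abbrev Kbar (k : Type*) [Field k] [LinearOrder k] [IsStrictOrderedRing k] : Type _ :=
  AdjoinRoot (X ^ 2 + 1 : k[X])

/-- The nontrivial `k`-automorphism (conjugation) of `k(i)`, sending `i ↦ -i`. -/
noncomputable def Kbar.conj (k : Type*) [Field k] [LinearOrder k] [IsStrictOrderedRing k] : Kbar k →+* Kbar k :=
  AdjoinRoot.lift (algebraMap k (Kbar k)) (-(AdjoinRoot.root _)) (by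
    have h := AdjoinRoot.eval₂_root (X ^ 2 + 1 : k[X])
    rw [AdjoinRoot.algebraMap_eq]
    simp only [eval₂_add, eval₂_pow, eval₂_X, eval₂_one, neg_sq] at h ⊢
    exact h)

/-- `I_p = diag(1,…,1,-1,…,-1)` with `p` ones. -/
def Ip (R : Type*) [Ring R] (n p : ℕ) : Matrix (Fin n) (Fin n) R :=
  Matrix.diagonal fun j => if (j : ℕ) < p then 1 else -1

/-- `J_p = diag(1,…,1,i,…,i)` with `p` ones. -/
noncomputable def Jp (k : Type*) [Field k] [LinearOrder k] [IsStrictOrderedRing k] (n p : ℕ) :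
    Matrix (Fin n) (Fin n) (Kbar k) :=
  Matrix.diagonal fun j => if (j : ℕ) < p then 1 else AdjoinRoot.root _

/-- The block-diagonal matrix with 2×2 blocks [[0,1],[-1,0]] (0-indexed version of `A_n`). -/
def An (R : Type*) [Ring R] (n : ℕ) : Matrix (Fin n) (Fin n) R :=
  Matrix.of fun i j =>
    if (i : ℕ) % 2 = 0 ∧ (j : ℕ) = (i : ℕ) + 1 then 1
    else if (i : ℕ) % 2 = 1 ∧ (j : ℕ) + 1 = (i : ℕ) then -1 else 0

/-- The standard embedding `μ : H → M₂(k̄)`,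
`a + bI + cJ + dK ↦ [[a+bi, c+di],[-c+di, a-bi]]`. -/
noncomputable def mu (k : Type*) [Field k] [LinearOrder k] [IsStrictOrderedRing k] (h : Quaternion k) :
    Matrix (Fin 2) (Fin 2) (Kbar k) :=
  !![algebraMap k (Kbar k) h.re + algebraMap k (Kbar k) h.imI * AdjoinRoot.root _,
     algebraMap k (Kbar k) h.imJ + algebraMap k (Kbar k) h.imK * AdjoinRoot.root _;
     -algebraMap k (Kbar k) h.imJ + algebraMap k (Kbar k) h.imK * AdjoinRoot.root _,
     algebraMap k (Kbar k) h.re - algebraMap k (Kbar k) h.imI * AdjoinRoot.root _]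


open scoped Quaternion

section XSqAddOne

variable {R : Type*} [CommRing R]

local notation "𝐢" => AdjoinRoot.root (X ^ 2 + 1 : R[X])

theorem AdjoinRoot.root_X_sq_add_one_sq : 𝐢 ^ 2 = -1 := by
  have h := AdjoinRoot.eval₂_root (X ^ 2 + 1 : R[X])
  simp only [eval₂_add, eval₂_pow, eval₂_X, eval₂_one] at h
  linear_combination h

theorem AdjoinRoot.exists_algebraMap_add_mul_root_eq (a : AdjoinRoot (X ^ 2 + 1 : R[X])) :
    ∃ x y : R, algebraMap R _ x + algebraMap R _ y * 𝐢 = a := by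
  obtain ⟨p, rfl⟩ := AdjoinRoot.mk_surjective a
  induction p using Polynomial.induction_on with
  | C c => exact ⟨c, 0, by simp [AdjoinRoot.algebraMap_eq]⟩
  | add p q hp hq =>
    obtain ⟨x, y, hp⟩ := hp
    obtain ⟨x', y', hq⟩ := hq
    refine ⟨x + x', y + y', ?_⟩
    rw [map_add (AdjoinRoot.mk _), ← hp, ← hq, map_add, map_add]
    ring
  | monomial n c h =>
    obtain ⟨x, y, h⟩ := h
    refine ⟨-y, x, ?_⟩
    rw [pow_succ (X : R[X]) n, ← mul_assoc, map_mul (AdjoinRoot.mk _), ← h, AdjoinRoot.mk_X,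
      map_neg]
    linear_combination -algebraMap R _ y * AdjoinRoot.root_X_sq_add_one_sq (R := R)

end XSqAddOne

namespace Kbar

variable {k : Type*} [Field k] [LinearOrder k] [IsStrictOrderedRing k]

instance : Nontrivial (Kbar k) :=
  AdjoinRoot.nontrivial _ (by rw [degree_add_eq_left_of_degree_lt] <;> simp)

theorem conj_algebraMap (x : k) :
    Kbar.conj k (algebraMap k (Kbar k) x) = algebraMap k (Kbar k) x :=
  AdjoinRoot.lift_of _

theorem conj_root : Kbar.conj k (AdjoinRoot.root _) = -AdjoinRoot.root _ :=
  AdjoinRoot.lift_root _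

def IsNonneg (z : Kbar k) : Prop :=
  ∃ r : k, 0 ≤ r ∧ algebraMap k (Kbar k) r = z

theorem IsNonneg.mul {z w : Kbar k} : IsNonneg z → IsNonneg w → IsNonneg (z * w)
  | ⟨r, hr, hrz⟩, ⟨s, hs, hsw⟩ => ⟨r * s, mul_nonneg hr hs, by rw [map_mul, hrz, hsw]⟩

end Kbar

section An

variable (R : Type*) [Ring R] (n : ℕ)

theorem An_two : An R 2 = !![0, 1; -1, 0] := by
  ext i j
  fin_cases i <;> fin_cases j <;> simp [An]

def finProdFinTwoEquiv : Fin n × Fin 2 ≃ Fin (2 * n) :=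
  finProdFinEquiv.trans (finCongr (Nat.mul_comm n 2))

theorem finProdFinTwoEquiv_apply_val {n : ℕ} (p : Fin n × Fin 2) :
    (finProdFinTwoEquiv n p : ℕ) = 2 * p.1 + p.2 := by
  simp [finProdFinTwoEquiv, finProdFinEquiv]
  ring

theorem An_submatrix_finProdFinTwoEquiv :
    (An R (2 * n)).submatrix (finProdFinTwoEquiv n) (finProdFinTwoEquiv n) =
      comp (Fin n) (Fin n) (Fin 2) (Fin 2) R (diagonal fun _ => An R 2) := by
  ext ⟨q, r⟩ ⟨q', s⟩
  by_cases hq : q = q'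
  · subst hq
    fin_cases r <;> fin_cases s <;> simp [An, finProdFinTwoEquiv_apply_val]
  · have hq' : (q : ℕ) ≠ q' := Fin.val_ne_of_ne hq
    fin_cases r <;> fin_cases s <;> simp [An, finProdFinTwoEquiv_apply_val, hq] <;> omega

theorem An_mul_self : An R (2 * n) * An R (2 * n) = -1 := by
  have hJ : An R 2 * An R 2 = -1 := by
    rw [An_two]
    ext i j
    fin_cases i <;> fin_cases j <;> simp
  have hA : An R (2 * n) = (compRingEquiv (Fin n) (Fin 2) R (diagonal fun _ => An R 2)).submatrix
      (finProdFinTwoEquiv n).symm (finProdFinTwoEquiv n).symm := by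
    rw [compRingEquiv_apply, ← An_submatrix_finProdFinTwoEquiv, submatrix_submatrix]
    simp
  have hd : (diagonal fun _ => -1 : Matrix (Fin n) (Fin n) (Matrix (Fin 2) (Fin 2) R)) = -1 := by
    rw [← diagonal_one, ← diagonal_neg]
    rfl
  rw [hA, submatrix_mul_equiv, ← map_mul, diagonal_mul_diagonal, hJ, hd, map_neg, map_one]
  exact congrArg Neg.neg (submatrix_one_equiv _)

end An

section Mu

variable {k : Type*} [Field k] [LinearOrder k] [IsStrictOrderedRing k]

variable (k) in
noncomputable def muRingHom : ℍ[k] →+* Matrix (Fin 2) (Fin 2) (Kbar k) where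
  toFun := mu k
  map_one' := by
    ext r s
    fin_cases r <;> fin_cases s <;> simp [mu]
  map_mul' x y := by
    have hi := AdjoinRoot.root_X_sq_add_one_sq (R := k)
    ext r s
    fin_cases r <;> fin_cases s <;>
    · simp [mu, Matrix.mul_apply]
      grind
  map_zero' := by
    ext r s
    fin_cases r <;> fin_cases s <;> simp [mu]
  map_add' x y := by
    ext r s
    fin_cases r <;> fin_cases s <;> simp [mu] <;> ring

theorem mu_zero : mu k 0 = 0 :=
  map_zero (muRingHom k)

theorem det_mu (h : ℍ[k]) : (mu k h).det = algebraMap k (Kbar k) (Quaternion.normSq h) := by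
  rw [mu, det_fin_two_of, Quaternion.normSq_def']
  simp only [map_add, map_pow]
  linear_combination (-algebraMap k (Kbar k) h.imI ^ 2 - algebraMap k (Kbar k) h.imK ^ 2) *
    AdjoinRoot.root_X_sq_add_one_sq (R := k)

theorem exists_mu_eq_of_mul_An_two_eq (Y : Matrix (Fin 2) (Fin 2) (Kbar k))
    (hY : Y * An (Kbar k) 2 = An (Kbar k) 2 * Y.map (Kbar.conj k)) : ∃ h, mu k h = Y := by
  have h11 : Y 1 1 = Kbar.conj k (Y 0 0) := by
    simpa [An_two, Matrix.mul_apply] using congrFun (congrFun hY 1) 0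
  have h10 : Y 1 0 = -Kbar.conj k (Y 0 1) := by
    simpa [An_two, Matrix.mul_apply] using congrFun (congrFun hY 1) 1
  obtain ⟨x, y, hxy⟩ := AdjoinRoot.exists_algebraMap_add_mul_root_eq (Y 0 0)
  obtain ⟨z, w, hzw⟩ := AdjoinRoot.exists_algebraMap_add_mul_root_eq (Y 0 1)
  refine ⟨⟨x, y, z, w⟩, ?_⟩
  ext r s
  fin_cases r <;> fin_cases s <;>
    simp [mu, h11, h10, ← hxy, ← hzw, Kbar.conj_algebraMap, Kbar.conj_root,
      -AdjoinRoot.algebraMap_eq] <;> ring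

end Mu

section MuMatrix

variable {k : Type*} [Field k] [LinearOrder k] [IsStrictOrderedRing k] {l m n : Type*}

noncomputable def muMatrix (N : Matrix m n ℍ[k]) : Matrix (m × Fin 2) (n × Fin 2) (Kbar k) :=
  comp m n (Fin 2) (Fin 2) (Kbar k) (N.map (mu k))

theorem muMatrix_apply (N : Matrix m n ℍ[k]) (i : m) (r : Fin 2) (j : n) (s : Fin 2) :
    muMatrix N (i, r) (j, s) = mu k (N i j) r s :=
  rfl

theorem muMatrix_zero : muMatrix (0 : Matrix m n ℍ[k]) = 0 := by
  ext ⟨i, r⟩ ⟨j, s⟩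
  simp [muMatrix_apply, mu_zero]

theorem muMatrix_one [DecidableEq m] : muMatrix (1 : Matrix m m ℍ[k]) = 1 :=
  (congrArg (comp m m (Fin 2) (Fin 2) (Kbar k))
    (Matrix.map_one _ mu_zero (map_one (muRingHom k)))).trans comp_one

theorem muMatrix_mul [Fintype m] (N N' : Matrix m m ℍ[k]) :
    muMatrix (N * N') = muMatrix N * muMatrix N' :=
  (congrArg (compRingEquiv m (Fin 2) (Kbar k)) (Matrix.map_mul (f := muRingHom k))).trans
    ((compRingEquiv m (Fin 2) (Kbar k)).map_mul _ _)

theorem muMatrix_submatrix (N : Matrix m n ℍ[k]) (e₁ : l → m) (e₂ : l → n) :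
    muMatrix (N.submatrix e₁ e₂) = (muMatrix N).submatrix (Prod.map e₁ id) (Prod.map e₂ id) :=
  rfl

theorem muMatrix_fromBlocks {m₁ m₂ n₁ n₂ : Type*} (A : Matrix m₁ n₁ ℍ[k]) (B : Matrix m₁ n₂ ℍ[k])
    (C : Matrix m₂ n₁ ℍ[k]) (D : Matrix m₂ n₂ ℍ[k]) :
    muMatrix (fromBlocks A B C D) =
      (fromBlocks (muMatrix A) (muMatrix B) (muMatrix C) (muMatrix D)).submatrix
        (Equiv.sumProdDistrib m₁ m₂ (Fin 2)) (Equiv.sumProdDistrib n₁ n₂ (Fin 2)) := by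
  ext ⟨x | x, r⟩ ⟨y | y, s⟩ <;> rfl

variable [Fintype m] [DecidableEq m] [Fintype n] [DecidableEq n]

theorem det_muMatrix_reindex (e : m ≃ n) (N : Matrix m m ℍ[k]) :
    (muMatrix (reindex e e N)).det = (muMatrix N).det := by
  rw [reindex_apply, muMatrix_submatrix]
  exact det_submatrix_equiv_self (e.symm.prodCongr (Equiv.refl (Fin 2))) _

theorem det_muMatrix_fromBlocks_zero₂₁ (A : Matrix m m ℍ[k]) (B : Matrix m n ℍ[k])
    (D : Matrix n n ℍ[k]) :
    (muMatrix (fromBlocks A B 0 D)).det = (muMatrix A).det * (muMatrix D).det := by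
  rw [muMatrix_fromBlocks, det_submatrix_equiv_self, muMatrix_zero, det_fromBlocks_zero₂₁]

theorem det_muMatrix_fromBlocks_zero₁₂ (A : Matrix m m ℍ[k]) (C : Matrix n m ℍ[k])
    (D : Matrix n n ℍ[k]) :
    (muMatrix (fromBlocks A 0 C D)).det = (muMatrix A).det * (muMatrix D).det := by
  rw [muMatrix_fromBlocks, det_submatrix_equiv_self, muMatrix_zero, det_fromBlocks_zero₁₂]

theorem det_muMatrix_of_unique [Unique m] (N : Matrix m m ℍ[k]) :
    (muMatrix N).det = algebraMap k (Kbar k) (Quaternion.normSq (N default default)) := by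
  have h : muMatrix N = (mu k (N default default)).submatrix Prod.snd Prod.snd := by
    ext ⟨i, r⟩ ⟨j, s⟩
    rw [muMatrix_apply, Unique.eq_default i, Unique.eq_default j]
    rfl
  rw [h, ← det_mu]
  exact det_submatrix_equiv_self (Equiv.uniqueProd (Fin 2) m) _

theorem det_muMatrix_eq_zero_of_col_eq_zero {N : Matrix m m ℍ[k]} (j : m)
    (h : ∀ i, N i j = 0) : (muMatrix N).det = 0 :=
  det_eq_zero_of_column_eq_zero (j, 0) fun ⟨i, r⟩ => by
    rw [muMatrix_apply, h, mu_zero, Matrix.zero_apply]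

end MuMatrix

theorem Matrix.fromBlocks_eq_of_mul_eq_one₂₂ {R m n : Type*} [Ring R] [Fintype m] [DecidableEq m]
    [Fintype n] [DecidableEq n] (A : Matrix m m R) (B : Matrix m n R) (C : Matrix n m R)
    {D D' : Matrix n n R} (h₁ : D' * D = 1) (h₂ : D * D' = 1) :
    fromBlocks A B C D =
      fromBlocks 1 (B * D') 0 1 * fromBlocks (A - B * D' * C) 0 0 D * fromBlocks 1 0 (D' * C) 1 := by
  simp only [fromBlocks_multiply, Matrix.one_mul, Matrix.mul_one, Matrix.zero_mul,
    Matrix.mul_zero, add_zero, zero_add, Matrix.mul_assoc, h₁]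
  congr 1
  · abel
  · rw [← Matrix.mul_assoc, h₂, Matrix.one_mul]

section Elimination

variable {k : Type*} [Field k] [LinearOrder k] [IsStrictOrderedRing k]
  {m : Type*} [Fintype m] [DecidableEq m]

theorem isNonneg_det_muMatrix_fromBlocks
    (ih : ∀ A : Matrix m m ℍ[k], Kbar.IsNonneg (muMatrix A).det)
    (A : Matrix m m ℍ[k]) (B : Matrix m (Fin 1) ℍ[k]) (C : Matrix (Fin 1) m ℍ[k])
    {D : Matrix (Fin 1) (Fin 1) ℍ[k]} (hD : D 0 0 ≠ 0) :
    Kbar.IsNonneg (muMatrix (fromBlocks A B C D)).det := by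
  set D' : Matrix (Fin 1) (Fin 1) ℍ[k] := of fun _ _ => (D 0 0)⁻¹
  have h₁ : D' * D = 1 := by
    refine Matrix.ext fun i j => ?_
    fin_cases i; fin_cases j
    simp [D', Matrix.mul_apply, hD]
  have h₂ : D * D' = 1 := by
    refine Matrix.ext fun i j => ?_
    fin_cases i; fin_cases j
    simp [D', Matrix.mul_apply, hD]
  rw [fromBlocks_eq_of_mul_eq_one₂₂ A B C h₁ h₂]
  simp only [muMatrix_mul, det_mul, det_muMatrix_fromBlocks_zero₂₁, det_muMatrix_fromBlocks_zero₁₂,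
    muMatrix_one, det_one, one_mul, mul_one, det_muMatrix_of_unique]
  exact (ih _).mul ⟨_, Quaternion.normSq_nonneg, rfl⟩

theorem exists_det_muMatrix_eq_and_ne_zero (P : Matrix (m ⊕ Fin 1) (m ⊕ Fin 1) ℍ[k])
    {x : m ⊕ Fin 1} (hx : P x (.inr 0) ≠ 0) :
    ∃ P' : Matrix (m ⊕ Fin 1) (m ⊕ Fin 1) ℍ[k],
      (muMatrix P').det = (muMatrix P).det ∧ P' (.inr 0) (.inr 0) ≠ 0 := by
  by_cases hP : P (.inr 0) (.inr 0) = 0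
  · obtain ⟨j⟩ | ⟨i⟩ := x
    · refine ⟨fromBlocks 1 0 (single 0 j 1) 1 * P, ?_, ?_⟩
      · simp only [muMatrix_mul, det_mul, det_muMatrix_fromBlocks_zero₁₂, muMatrix_one, det_one,
          one_mul]
      · simpa [Matrix.mul_apply, Fintype.sum_sum_type, single_apply, hP] using hx
    · exact absurd hP (Subsingleton.elim i 0 ▸ hx)
  · exact ⟨P, rfl, hP⟩

theorem isNonneg_det_muMatrix :
    ∀ {n : ℕ} (N : Matrix (Fin n) (Fin n) ℍ[k]), Kbar.IsNonneg (muMatrix N).det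
  | 0, N => ⟨1, zero_le_one, by simp⟩
  | n + 1, N => by
    rw [← det_muMatrix_reindex finSumFinEquiv.symm N]
    set P := reindex finSumFinEquiv.symm finSumFinEquiv.symm N
    by_cases hcol : ∀ x, P x (.inr 0) = 0
    · rw [det_muMatrix_eq_zero_of_col_eq_zero _ hcol]
      exact ⟨0, le_rfl, map_zero _⟩
    · obtain ⟨x, hx⟩ := not_forall.mp hcol
      obtain ⟨P', hdet, hP'⟩ := exists_det_muMatrix_eq_and_ne_zero P hx
      rw [← hdet, ← fromBlocks_toBlocks P']
      exact isNonneg_det_muMatrix_fromBlocks isNonneg_det_muMatrix _ _ _ hP'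

end Elimination

theorem exists_muMatrix_eq_of_mul_comp_An_two_eq {k : Type*} [Field k] [LinearOrder k]
    [IsStrictOrderedRing k] {ι : Type*} [Fintype ι] [DecidableEq ι]
    (X : Matrix (ι × Fin 2) (ι × Fin 2) (Kbar k))
    (hX : X * comp ι ι (Fin 2) (Fin 2) _ (diagonal fun _ => An (Kbar k) 2) =
      comp ι ι (Fin 2) (Fin 2) _ (diagonal fun _ => An (Kbar k) 2) * X.map (Kbar.conj k)) :
    ∃ N : Matrix ι ι ℍ[k], muMatrix N = X := by
  set Y := (comp ι ι (Fin 2) (Fin 2) (Kbar k)).symm X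
  have hY : ∀ i j, Y i j * An (Kbar k) 2 = An (Kbar k) 2 * (Y i j).map (Kbar.conj k) := by
    intro i j
    have hij := congrFun (congrFun (congrArg (compRingEquiv ι (Fin 2) (Kbar k)).symm hX) i) j
    simp only [map_mul, compRingEquiv_symm_apply, mul_diagonal, diagonal_mul,
      Equiv.symm_apply_apply] at hij
    exact hij
  choose h hh using fun i j => exists_mu_eq_of_mul_An_two_eq (Y i j) (hY i j)
  exact ⟨of h, by ext ⟨i, r⟩ ⟨j, s⟩; simp [muMatrix_apply, hh, Y]⟩

theorem det_pos_of_quaternionic_fixed_general (k : Type*) [Field k] [LinearOrder k] [IsStrictOrderedRing k]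
    (n : ℕ) (M : Matrix (Fin (2 * n)) (Fin (2 * n)) (Kbar k))
    (hM : IsUnit M.det)
    (hfix : M = An (Kbar k) (2 * n) * M.map (Kbar.conj k) * (An (Kbar k) (2 * n))⁻¹) :
    ∃ r : k, 0 < r ∧ algebraMap k (Kbar k) r = M.det := by
  set A := An (Kbar k) (2 * n)
  set e := finProdFinTwoEquiv n
  have hAinv : A⁻¹ = -A := inv_eq_left_inv (by rw [Matrix.neg_mul, An_mul_self, neg_neg])
  have hMA : M * A = A * M.map (Kbar.conj k) := by
    conv_lhs => rw [hfix]
    rw [hAinv, Matrix.mul_assoc, Matrix.neg_mul, An_mul_self, Matrix.mul_neg, Matrix.mul_neg,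
      Matrix.mul_one, neg_neg]
  obtain ⟨N, hN⟩ := exists_muMatrix_eq_of_mul_comp_An_two_eq (M.submatrix e e) (by
    rw [← An_submatrix_finProdFinTwoEquiv, submatrix_mul_equiv, hMA,
      ← submatrix_mul_equiv _ _ _ e, submatrix_map])
  obtain ⟨r, hr, hrM⟩ := isNonneg_det_muMatrix N
  rw [hN, det_submatrix_equiv_self] at hrM
  refine ⟨r, hr.lt_of_ne ?_, hrM⟩
  rintro rfl
  rw [map_zero] at hrM
  exact not_isUnit_zero (hrM ▸ hM)

/-- if an invertible matrix `M` over `k̄` satisfies `M = A·conj(M)·A⁻¹`,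
then `det M` is a positive element of `k`. -/
theorem det_pos_of_quaternionic_fixed (k : Type*) [Field k] [LinearOrder k] [IsStrictOrderedRing k]
    (hk : IsRealClosed' k) (n : ℕ) (M : Matrix (Fin (2 * n)) (Fin (2 * n)) (Kbar k))
    (hM : IsUnit M.det)
    (hfix : M = An (Kbar k) (2 * n) * M.map (Kbar.conj k) * (An (Kbar k) (2 * n))⁻¹) :
    ∃ r : k, 0 < r ∧ algebraMap k (Kbar k) r = M.det :=
  det_pos_of_quaternionic_fixed_general k n M hM hfix
end

section
/- Let k be a real closed field and H the quaternion division algebra over k with standard involution σ. Any two nondegenerate σ-anti-hermitian forms on Hⁿ (satisfying σ(H₀)ᵗ = -H₀) are equivalent; i.e., up to equivalence there is exactly one nondegenerate anti-hermitian form on Hⁿ. -/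
/-!
Congruence `A ↦ Mᴴ A M` diagonalises every skew-hermitian matrix over a division ring with
involution in which `2 ≠ 0` and some `s ≠ 0` has `star s = -s`: a nonzero skew-hermitian form has
an anisotropic vector (if `e_i` is isotropic but `A e_i ≠ 0`, one of `e_i ± l e_j` is not), and
its orthogonal complement splits off. Over `ℍ = (-1,-1)/k` the diagonal entries of an
invertible skew-hermitian matrix are nonzero pure quaternions, and each of them is brought to `j`
by `c ↦ star m * c * m`: a pure `c` of norm `s²` satisfies `u c = s j u` for `u = c + s j`
(or `u = i` when that vanishes), and square roots of positive elements of `k` then rescale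
`s · normSq u` to `1`. So every such form is congruent to `diag(j, …, j)`.
-/

open Polynomial Matrix

/-- A (linearly ordered) field is real closed if every nonnegative element is a square and
every polynomial of odd degree has a root. -/
def IsRealClosedOrd (k : Type*) [Field k] [LinearOrder k] [IsStrictOrderedRing k] : Prop :=
  (∀ x : k, 0 ≤ x → ∃ y, y ^ 2 = x) ∧
  ∀ p : Polynomial k, Odd p.natDegree → ∃ x, p.eval x = 0

open scoped Quaternion

namespace Matrix

variable {ι κ R : Type*} [Fintype ι] [DecidableEq ι] [Fintype κ] [DecidableEq κ] [Ring R]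
  [StarRing R]

def StarCongruent (A B : Matrix ι ι R) : Prop :=
  ∃ M : Matrix ι ι R, IsUnit M ∧ Mᴴ * A * M = B

namespace StarCongruent

variable {A B C : Matrix ι ι R}

theorem refl (A : Matrix ι ι R) : StarCongruent A A := ⟨1, isUnit_one, by simp⟩

theorem trans : StarCongruent A B → StarCongruent B C → StarCongruent A C
  | ⟨M, hM, hMAB⟩, ⟨N, hN, hNBC⟩ =>
    ⟨M * N, hM.mul hN, by rw [← hNBC, ← hMAB, conjTranspose_mul]; simp only [Matrix.mul_assoc]⟩

theorem symm : StarCongruent A B → StarCongruent B A := by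
  rintro ⟨_, ⟨U, rfl⟩, rfl⟩
  refine ⟨↑U⁻¹, U⁻¹.isUnit, ?_⟩
  calc (↑U⁻¹ : Matrix ι ι R)ᴴ * ((↑U)ᴴ * A * ↑U) * ↑U⁻¹
      = (↑U * ↑U⁻¹ : Matrix ι ι R)ᴴ * A * (↑U * ↑U⁻¹) := by
        simp only [conjTranspose_mul, Matrix.mul_assoc]
    _ = A := by simp

theorem conjTranspose_eq_neg (h : StarCongruent A B) (hA : Aᴴ = -A) : Bᴴ = -B := by
  obtain ⟨M, -, rfl⟩ := h
  simp [Matrix.mul_assoc, hA]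

theorem isUnit (h : StarCongruent A B) (hA : IsUnit A) : IsUnit B := by
  obtain ⟨M, hM, rfl⟩ := h
  exact ((star_eq_conjTranspose M ▸ hM.star).mul hA).mul hM

theorem submatrix (h : StarCongruent A B) (e : κ ≃ ι) :
    StarCongruent (A.submatrix e e) (B.submatrix e e) := by
  obtain ⟨M, hM, rfl⟩ := h
  refine ⟨M.submatrix e e, hM.map (reindexAlgEquiv ℕ R e.symm), ?_⟩
  rw [conjTranspose_submatrix, submatrix_mul_equiv, submatrix_mul_equiv]

theorem fromBlocks {A' B' : Matrix κ κ R} (h : StarCongruent A B) (h' : StarCongruent A' B') :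
    StarCongruent (fromBlocks A 0 0 A') (fromBlocks B 0 0 B') := by
  obtain ⟨_, ⟨U, rfl⟩, rfl⟩ := h
  obtain ⟨_, ⟨U', rfl⟩, rfl⟩ := h'
  refine ⟨Matrix.fromBlocks U 0 0 U',
    ⟨⟨Matrix.fromBlocks ↑U 0 0 ↑U', Matrix.fromBlocks ↑U⁻¹ 0 0 ↑U'⁻¹, ?_, ?_⟩, rfl⟩, ?_⟩ <;>
    simp [fromBlocks_multiply, fromBlocks_conjTranspose]

theorem diagonal {d d' : ι → R} (h : ∀ i, ∃ m : R, IsUnit m ∧ star m * d i * m = d' i) :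
    StarCongruent (Matrix.diagonal d) (Matrix.diagonal d') := by
  choose m hm hmd using h
  refine ⟨Matrix.diagonal m, (Pi.isUnit_iff.2 hm).map (diagonalRingHom ι R), ?_⟩
  simp [diagonal_conjTranspose, hmd]

end StarCongruent

theorem exists_starCongruent_diagonal_of_row_col_eq_zero {A : Matrix ι ι R} {i : ι}
    (hA : ∀ j ≠ i, A i j = 0 ∧ A j i = 0) {d : {j // j ≠ i} → R}
    (hd : StarCongruent (A.submatrix (↑) (↑)) (diagonal d)) :
    ∃ d' : ι → R, StarCongruent A (diagonal d') := by
  let e := Equiv.sumCompl (· = i)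
  have hblocks :
      A.submatrix e e = fromBlocks (diagonal fun _ => A i i) 0 0 (A.submatrix (↑) (↑)) := by
    ext (⟨a, rfl⟩ | ⟨a, ha⟩) (⟨b, rfl⟩ | ⟨b, hb⟩)
    · simp [e]
    · simp [e, (hA b hb).1]
    · simp [e, (hA a ha).2]
    · simp [e]
  have := ((StarCongruent.refl (diagonal fun _ => A i i)).fromBlocks hd).submatrix e.symm
  rw [← hblocks, fromBlocks_diagonal, submatrix_diagonal_equiv, submatrix_submatrix] at this
  exact ⟨_, by simpa using this⟩

section DivisionRing

variable {D : Type*} [DivisionRing D] [StarRing D]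

theorem conjTranspose_one_add_single_mul_mul_apply (A : Matrix ι ι D) (i j : ι) (l : D) :
    ((1 + single j i l)ᴴ * A * (1 + single j i l) : Matrix ι ι D) i i =
      A i i + star l * A j i + A i j * l + star l * A j j * l := by
  simp [conjTranspose_single, Matrix.add_mul, Matrix.mul_add, add_assoc, mul_assoc]

theorem exists_starCongruent_apply_self_ne_zero {s : D} (hs : star s = -s) (hs0 : s ≠ 0)
    (h2 : (2 : D) ≠ 0) {A : Matrix ι ι D} (hA : Aᴴ = -A) (hA0 : A ≠ 0) :
    ∃ B i, StarCongruent A B ∧ B i i ≠ 0 := by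
  by_cases hdiag : ∃ i, A i i ≠ 0
  · obtain ⟨i, hi⟩ := hdiag
    exact ⟨A, i, StarCongruent.refl A, hi⟩
  push Not at hdiag
  obtain ⟨j, i, hji⟩ : ∃ j i, A j i ≠ 0 := by
    by_contra! h
    exact hA0 (Matrix.ext h)
  have hij : i ≠ j := fun h => hji (h ▸ hdiag i)
  have hAij : A i j = -star (A j i) := by
    rw [← star_star (A i j), ← conjTranspose_apply, hA, neg_apply, star_neg]
  have hcongr (l : D) : StarCongruent A ((1 + single j i l)ᴴ * A * (1 + single j i l)) :=
    ⟨_, IsNilpotent.isUnit_one_add ⟨2, by rw [pow_two, single_mul_single_of_ne (h := hij)]⟩, rfl⟩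
  -- at `± l` the two terms linear in `l` are both `∓ s`, so the two values differ by `4 s`
  set l := (star (A j i))⁻¹ * s
  have hlin₁ : star l * A j i = -s := by
    rw [star_mul, star_inv₀, star_star, hs, neg_mul, neg_mul, inv_mul_cancel_right₀ hji]
  have hlin₂ : A i j * l = -s := by
    rw [hAij, neg_mul, mul_inv_cancel_left₀ (star_ne_zero.2 hji)]
  by_cases hl : ((1 + single j i l)ᴴ * A * (1 + single j i l) : Matrix ι ι D) i i = 0
  · refine ⟨_, i, hcongr (-l), fun hl' => mul_ne_zero (mul_ne_zero h2 h2) hs0 ?_⟩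
    rw [conjTranspose_one_add_single_mul_mul_apply] at hl hl'
    rw [star_neg, neg_mul, neg_mul, mul_neg, mul_neg, neg_mul, neg_neg, hlin₁, hlin₂, hdiag] at hl'
    rw [hlin₁, hlin₂, hdiag] at hl
    calc (2 * 2 : D) * s = (0 + -(-s) + -(-s) + star l * A j j * l)
          - (0 + -s + -s + star l * A j j * l) := by noncomm_ring
      _ = 0 := by rw [hl, hl', sub_zero]
  · exact ⟨_, i, hcongr l, hl⟩

theorem exists_starCongruent_row_col_eq_zero {A : Matrix ι ι D} (hA : Aᴴ = -A) {i : ι}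
    (hi : A i i ≠ 0) : ∃ B, StarCongruent A B ∧ ∀ j ≠ i, B i j = 0 ∧ B j i = 0 := by
  set w : ι → D := Function.update (fun j => -((A i i)⁻¹ * A i j)) i 0
  set W : Matrix ι ι D := vecMulVec (Pi.single i 1) w
  have hWW : W * W = 0 := by simp [W, w, vecMulVec_mul_vecMulVec]
  have hrow : ∀ j ≠ i, ((1 + W)ᴴ * A * (1 + W) : Matrix ι ι D) i j = 0 := by
    intro j hj
    simp [W, w, Matrix.mul_add, Matrix.add_mul, mul_vecMulVec, vecMulVec_mul, vecMulVec_apply, hj,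
      hi]
  have hB : StarCongruent A ((1 + W)ᴴ * A * (1 + W)) :=
    ⟨1 + W, IsNilpotent.isUnit_one_add ⟨2, by rw [pow_two, hWW]⟩, rfl⟩
  refine ⟨_, hB, fun j hj => ⟨hrow j hj, ?_⟩⟩
  have := congrFun (congrFun (hB.conjTranspose_eq_neg hA) j) i
  rwa [conjTranspose_apply, hrow j hj, star_zero, neg_apply, eq_comm, neg_eq_zero] at this

theorem exists_starCongruent_diagonal {s : D} (hs : star s = -s) (hs0 : s ≠ 0) (h2 : (2 : D) ≠ 0)
    (A : Matrix ι ι D) (hA : Aᴴ = -A) :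
    ∃ d, StarCongruent A (diagonal d) := by
  induction h : Fintype.card ι using Nat.strong_induction_on generalizing ι with
  | _ n ih =>
  by_cases hA0 : A = 0
  · exact ⟨fun _ => 0, by rw [hA0, diagonal_zero]; exact .refl 0⟩
  obtain ⟨B, i, hAB, hi⟩ := exists_starCongruent_apply_self_ne_zero hs hs0 h2 hA hA0
  obtain ⟨C, hBC, hC⟩ := exists_starCongruent_row_col_eq_zero (hAB.conjTranspose_eq_neg hA) hi
  have hAC := hAB.trans hBC
  obtain ⟨d, hd⟩ := ih _ (h ▸ Fintype.card_subtype_lt (p := (· ≠ i)) (not_not.2 rfl))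
    (C.submatrix ((↑) : {j // j ≠ i} → ι) (↑))
    (by rw [conjTranspose_submatrix, hAC.conjTranspose_eq_neg hA]; rfl) rfl
  obtain ⟨d', hd'⟩ := exists_starCongruent_diagonal_of_row_col_eq_zero hC hd
  exact ⟨d', hAC.trans hd'⟩

end DivisionRing

end Matrix

namespace Quaternion

section CommRing

variable {R : Type*} [CommRing R]

@[simps] def i : ℍ[R] := ⟨0, 1, 0, 0⟩

@[simps] def j : ℍ[R] := ⟨0, 0, 1, 0⟩

theorem star_j : star (j : ℍ[R]) = -j := by
  ext <;> simp

theorem j_ne_zero [Nontrivial R] : (j : ℍ[R]) ≠ 0 :=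
  fun h => by simpa using congrArg QuaternionAlgebra.imJ h

theorem mul_self_of_star_eq_neg {p : ℍ[R]} (hp : star p = -p) :
    p * p = -((normSq p : R) : ℍ[R]) := by
  rw [← self_mul_star, hp, mul_neg, neg_neg]

theorem exists_ne_zero_mul_eq_smul_j_mul [Nontrivial R] {c : ℍ[R]} (hc : star c = -c) {s : R}
    (hs : s ^ 2 = normSq c) : ∃ u : ℍ[R], u ≠ 0 ∧ u * c = (s • j) * u := by
  by_cases hcj : c + s • j = 0
  · refine ⟨i, fun h => by simpa using congrArg QuaternionAlgebra.imI h, ?_⟩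
    rw [eq_neg_of_add_eq_zero_left hcj]
    ext <;> simp
  · refine ⟨c + s • j, hcj, ?_⟩
    have hj : (s • j) * (s • j) = -((normSq c : R) : ℍ[R]) := by
      rw [← hs]
      ext <;> simp [sq]
    rw [add_mul, mul_add, mul_self_of_star_eq_neg hc, hj, add_comm]

end CommRing

theorem exists_star_mul_mul_eq_j {k : Type*} [Field k] [LinearOrder k] [IsStrictOrderedRing k]
    (hsq : ∀ x : k, 0 ≤ x → ∃ y, y ^ 2 = x) {c : ℍ[k]} (hc : star c = -c) (hc0 : c ≠ 0) :
    ∃ m : ℍ[k], m ≠ 0 ∧ star m * c * m = j := by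
  obtain ⟨s, hs⟩ := hsq _ normSq_nonneg
  rw [← sq_abs] at hs
  obtain ⟨u, hu0, hu⟩ := exists_ne_zero_mul_eq_smul_j_mul hc hs
  have hs0 : 0 < |s| := by
    rw [abs_pos]; rintro rfl
    exact hc0 (normSq_eq_zero.1 (by simpa using hs.symm))
  have hu0' : 0 < normSq u := normSq_nonneg.lt_of_ne' (normSq_ne_zero.2 hu0)
  obtain ⟨t, ht⟩ := hsq (|s| * normSq u)⁻¹ (by positivity)
  have ht0 : t ≠ 0 := by
    rintro rfl
    rw [zero_pow two_ne_zero, eq_comm, inv_eq_zero] at ht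
    exact (mul_pos hs0 hu0').ne' ht
  refine ⟨t • star u, by simpa using ⟨ht0, hu0⟩, ?_⟩
  calc star (t • star u) * c * (t • star u) = t ^ 2 • (u * c * star u) := by
        simp [smul_smul, sq]
    _ = (t ^ 2 * (|s| * normSq u)) • j := by
        rw [hu, mul_assoc, self_mul_star, mul_coe_eq_smul]
        module
    _ = j := by rw [ht, inv_mul_cancel₀ (by positivity), one_smul]

end Quaternion

theorem Matrix.starCongruent_diagonal_j {k : Type*} [Field k] [LinearOrder k]
    [IsStrictOrderedRing k] (hsq : ∀ x : k, 0 ≤ x → ∃ y, y ^ 2 = x) {ι : Type*} [Fintype ι]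
    [DecidableEq ι] {A : Matrix ι ι ℍ[k]} (hA : Aᴴ = -A) (hAu : IsUnit A) :
    StarCongruent A (diagonal fun _ => Quaternion.j) := by
  have h2 : (2 : ℍ[k]) ≠ 0 := fun h => two_ne_zero (congrArg QuaternionAlgebra.re h : (2 : k) = 0)
  obtain ⟨d, hd⟩ := exists_starCongruent_diagonal Quaternion.star_j Quaternion.j_ne_zero h2 A hA
  have hskew := hd.conjTranspose_eq_neg hA
  obtain ⟨B, hB⟩ := (hd.isUnit hAu).exists_right_inv
  refine hd.trans (StarCongruent.diagonal fun i => ?_)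
  have hdi : star (d i) = -d i := by simpa using congrFun (congrFun hskew i) i
  have hdi0 : d i ≠ 0 := fun h => by simpa [h] using congrFun (congrFun hB i) i
  obtain ⟨m, hm0, hm⟩ := Quaternion.exists_star_mul_mul_eq_j hsq hdi hdi0
  exact ⟨m, hm0.isUnit, hm⟩

/-- any two nondegenerate σ-anti-hermitian forms on `Hⁿ` are equivalent
(σ the standard quaternion involution, i.e. `star`). -/
theorem quaternion_antihermitian_unique (k : Type*) [Field k] [LinearOrder k] [IsStrictOrderedRing k]
    (hk : IsRealClosedOrd k) (n : ℕ)
    (H₀ H₁ : Matrix (Fin n) (Fin n) (Quaternion k))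
    (h₀ : (H₀.map star)ᵀ = -H₀) (h₁ : (H₁.map star)ᵀ = -H₁)
    (hu₀ : IsUnit H₀) (hu₁ : IsUnit H₁) :
    ∃ M : Matrix (Fin n) (Fin n) (Quaternion k),
      IsUnit M ∧ (M.map star)ᵀ * H₀ * M = H₁ := by
  exact (starCongruent_diagonal_j hk.1 h₀ hu₀).trans (starCongruent_diagonal_j hk.1 h₁ hu₁).symm
end
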